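/- arXiv:2011.04444 — 14 statements merged into one kernel-verified Lean document; each statement's English description precedes it below -/
import Mathlib

section
/- Let H be an intersecting hypergraph with e edges whose maximum vertex degree is Δ. Then the covering number satisfies τ(H) ≤ 1 + ⌈(e − Δ)/2⌉. -/
/-- A set of vertices `C` covers the hypergraph with edge set `E` if every edge
contains a vertex of `C`. -/
def IsCover {V : Type*} (E : Finset (Finset V)) (C : Finset V) : Prop :=
  ∀ e ∈ E, ∃ v ∈ e, v ∈ C

/-- The covering number: the minimum size of a cover. -/
noncomputable def coverNumber {V : Type*} (E : Finset (Finset V)) : ℕ :=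
  sInf {n : ℕ | ∃ C : Finset V, C.card = n ∧ IsCover E C}

/-- The degree of a vertex: the number of edges containing it. -/
def degree {V : Type*} [DecidableEq V] (E : Finset (Finset V)) (v : V) : ℕ :=
  (E.filter (fun e => v ∈ e)).card

lemma aux_cover {V : Type*} [DecidableEq V] :
    ∀ n (F : Finset (Finset V)), F.card = n →
    (∀ e ∈ F, e.Nonempty) →
    (∀ e ∈ F, ∀ f ∈ F, e ≠ f → (e ∩ f).Nonempty) →
    ∃ C : Finset V, IsCover F C ∧ C.card ≤ (n + 1) / 2 := by
  intro n
  induction n using Nat.strong_induction_on with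
  | _ n ih =>
    intro F hcard hne hint
    rcases Nat.eq_zero_or_pos n with h0 | hpos
    · subst h0
      refine ⟨∅, ?_, by simp⟩
      intro e he
      simp [Finset.card_eq_zero.mp hcard] at he
    · have hFne : F.Nonempty := Finset.card_pos.mp (hcard ▸ hpos)
      obtain ⟨e, he⟩ := hFne
      by_cases hsing : ∀ f ∈ F, f = e
      · obtain ⟨v, hv⟩ := hne e he
        exact ⟨{v}, fun f hf => ⟨v, (hsing f hf) ▸ hv, Finset.mem_singleton_self v⟩,
          by simp; omega⟩
      · push_neg at hsing
        obtain ⟨f, hf, hfe⟩ := hsing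
        obtain ⟨w, hw⟩ := hint f hf e he hfe
        have hwf : w ∈ f := (Finset.mem_inter.mp hw).1
        have hwe : w ∈ e := (Finset.mem_inter.mp hw).2
        set F' := F \ {e, f} with hF'
        have hsub : F' ⊆ F := Finset.sdiff_subset
        have hcard' : F'.card = n - 2 := by
          have : ({e, f} : Finset (Finset V)) ⊆ F := by
            intro x hx
            rcases Finset.mem_insert.mp hx with h | h
            · exact h ▸ he
            · exact (Finset.mem_singleton.mp h) ▸ hf
          rw [Finset.card_sdiff_of_subset this, Finset.card_pair (Ne.symm hfe), hcard]
        have hn2 : 2 ≤ n := by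
          have : ({e, f} : Finset (Finset V)).card ≤ F.card :=
            Finset.card_le_card (by
              intro x hx
              rcases Finset.mem_insert.mp hx with h | h
              · exact h ▸ he
              · exact (Finset.mem_singleton.mp h) ▸ hf)
          rw [Finset.card_pair (Ne.symm hfe), hcard] at this
          exact this
        obtain ⟨C, hC, hCcard⟩ := ih (n - 2) (by omega) F' hcard'
          (fun g hg => hne g (hsub hg))
          (fun g hg h hh => hint g (hsub hg) h (hsub hh))
        refine ⟨insert w C, ?_, ?_⟩
        · intro g hg
          by_cases hge : g = e
          · exact ⟨w, hge ▸ hwe, Finset.mem_insert_self w C⟩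
          · by_cases hgf : g = f
            · exact ⟨w, hgf ▸ hwf, Finset.mem_insert_self w C⟩
            · obtain ⟨v, hv1, hv2⟩ := hC g (by
                simp [hF', Finset.mem_sdiff, hg, hge, hgf])
              exact ⟨v, hv1, Finset.mem_insert_of_mem hv2⟩
        · have := Finset.card_insert_le w C
          omega

/-- Let `H` be an intersecting hypergraph with `e` edges whose maximum vertex degree is `Δ`.
Then `τ(H) ≤ 1 + ⌈(e − Δ)/2⌉`. -/
theorem stmt0 {V : Type*} [DecidableEq V] (E : Finset (Finset V)) (Δ : ℕ)
    (hne : ∀ e ∈ E, e.Nonempty)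
    (hint : ∀ e ∈ E, ∀ f ∈ E, e ≠ f → (e ∩ f).Nonempty)
    (hub : ∀ v : V, degree E v ≤ Δ)
    (hmax : ∃ v : V, degree E v = Δ) :
    coverNumber E ≤ 1 + (E.card - Δ + 1) / 2 := by
  obtain ⟨v, hv⟩ := hmax
  set F := E.filter (fun e => v ∉ e) with hF
  have hFcard : F.card = E.card - Δ := by
    have := Finset.card_filter_add_card_filter_not
      (s := E) (p := fun e => v ∈ e)
    unfold degree at hv
    simp only [hF]
    omega
  obtain ⟨C, hC, hCcard⟩ := aux_cover (E.card - Δ) F hFcard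
    (fun e he => hne e (Finset.mem_filter.mp he).1)
    (fun e he f hf => hint e (Finset.mem_filter.mp he).1 f (Finset.mem_filter.mp hf).1)
  have hcover : IsCover E (insert v C) := by
    intro e he
    by_cases hve : v ∈ e
    · exact ⟨v, hve, Finset.mem_insert_self v C⟩
    · obtain ⟨w, hw1, hw2⟩ := hC e (Finset.mem_filter.mpr ⟨he, hve⟩)
      exact ⟨w, hw1, Finset.mem_insert_of_mem hw2⟩
  calc coverNumber E ≤ (insert v C).card :=
        Nat.sInf_le ⟨insert v C, rfl, hcover⟩
    _ ≤ 1 + (E.card - Δ + 1) / 2 := by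
        have := Finset.card_insert_le v C
        omega
end

section
/- Let H be an r-uniform intersecting hypergraph with e edges and maximum vertex degree Δ, and suppose τ(H) = r − 1. Then Δ ≤ e + 4 − 2r if e − Δ is even, and Δ ≤ e + 5 − 2r if e − Δ is odd. -/
lemma cover_half {V : Type*} [DecidableEq V] :
    ∀ n (F : Finset (Finset V)), F.card = n →
    (∀ g ∈ F, ∀ h ∈ F, g ≠ h → (g ∩ h).Nonempty) →
    (∀ g ∈ F, g.Nonempty) →
    ∃ C : Finset V, IsCover F C ∧ 2 * C.card ≤ F.card + 1 ∧
      (Even F.card → 2 * C.card ≤ F.card) := by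
  intro n
  induction n using Nat.strong_induction_on with
  | _ n ih =>
    intro F hcard hint hne
    match n, hcard with
    | 0, hcard =>
      refine ⟨∅, ?_, by simp [hcard], by simp [hcard]⟩
      intro e he
      simp [Finset.card_eq_zero.mp hcard] at he
    | 1, hcard =>
      obtain ⟨g, hg⟩ := Finset.card_eq_one.mp hcard
      obtain ⟨x, hx⟩ := hne g (by simp [hg])
      refine ⟨{x}, ?_, by simp [hcard], by simp [hcard]⟩
      intro e he
      rw [hg, Finset.mem_singleton] at he
      exact ⟨x, he ▸ hx, Finset.mem_singleton_self x⟩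
    | (m+2), hcard =>
      obtain ⟨g, hg, h, hh, hgh⟩ := Finset.one_lt_card.mp (by omega : 1 < F.card)
      obtain ⟨x, hx⟩ := hint g hg h hh hgh
      set F' := (F.erase g).erase h with hF'
      have hFc : F'.card = m := by
        rw [hF', Finset.card_erase_of_mem (Finset.mem_erase.mpr ⟨Ne.symm hgh, hh⟩),
          Finset.card_erase_of_mem hg, hcard]
        omega
      have hsub : F' ⊆ F := (Finset.erase_subset _ _).trans (Finset.erase_subset _ _)
      obtain ⟨C, hC, hC1, hC2⟩ := ih m (by omega) F' hFc
        (fun a ha b hb => hint a (hsub ha) b (hsub hb)) (fun a ha => hne a (hsub ha))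
      rw [Finset.mem_inter] at hx
      refine ⟨insert x C, ?_, ?_, ?_⟩
      · intro e he
        by_cases heg : e = g
        · exact ⟨x, heg ▸ hx.1, Finset.mem_insert_self x C⟩
        by_cases heh : e = h
        · exact ⟨x, heh ▸ hx.2, Finset.mem_insert_self x C⟩
        · obtain ⟨w, hw1, hw2⟩ := hC e (Finset.mem_erase.mpr ⟨heh, Finset.mem_erase.mpr ⟨heg, he⟩⟩)
          exact ⟨w, hw1, Finset.mem_insert_of_mem hw2⟩
      · have := Finset.card_insert_le x C
        omega
      · intro hev
        have : Even m := by
          rw [hcard, Nat.even_iff] at hev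
          rw [Nat.even_iff]
          omega
        have := hC2 (hFc ▸ this)
        have := Finset.card_insert_le x C
        omega

/-- Let `H` be an `r`-uniform intersecting hypergraph with `e` edges and maximum vertex
degree `Δ`, and suppose `τ(H) = r − 1`. Then `Δ ≤ e + 4 − 2r` if `e − Δ` is even, and
`Δ ≤ e + 5 − 2r` if `e − Δ` is odd. -/
theorem stmt1 {V : Type*} [DecidableEq V] (E : Finset (Finset V)) (r Δ : ℕ)
    (hunif : ∀ e ∈ E, e.card = r)
    (hint : ∀ e ∈ E, ∀ f ∈ E, e ≠ f → (e ∩ f).Nonempty)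
    (hub : ∀ v : V, degree E v ≤ Δ)
    (hmax : ∃ v : V, degree E v = Δ)
    (hτ : coverNumber E = r - 1) :
    (Even ((E.card : ℤ) - Δ) → (Δ : ℤ) ≤ (E.card : ℤ) + 4 - 2 * r) ∧
    (Odd ((E.card : ℤ) - Δ) → (Δ : ℤ) ≤ (E.card : ℤ) + 5 - 2 * r) := by
  obtain ⟨v, hv⟩ := hmax
  have hΔe : Δ ≤ E.card := hv ▸ Finset.card_filter_le E _
  by_cases hr : r ≤ 2
  · exact ⟨fun _ => by omega, fun _ => by omega⟩
  · set F := E.filter (fun e => v ∉ e) with hF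
    have hsub : F ⊆ E := Finset.filter_subset _ _
    have hFcard : F.card + Δ = E.card := by
      have := Finset.card_filter_add_card_filter_not (s := E) (p := fun e => v ∈ e)
      unfold F
      rw [← hv]
      unfold degree
      omega
    obtain ⟨C, hC, hC1, hC2⟩ := cover_half F.card F rfl
      (fun g hg h hh => hint g (hsub hg) h (hsub hh))
      (fun g hg => Finset.card_pos.mp (by rw [hunif g (hsub hg)]; omega))
    have hcov : IsCover E (insert v C) := by
      intro e he
      by_cases hve : v ∈ e
      · exact ⟨v, hve, Finset.mem_insert_self v C⟩
      · obtain ⟨w, hw1, hw2⟩ := hC e (Finset.mem_filter.mpr ⟨he, hve⟩)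
        exact ⟨w, hw1, Finset.mem_insert_of_mem hw2⟩
    have hle : coverNumber E ≤ (insert v C).card :=
      Nat.sInf_le ⟨insert v C, rfl, hcov⟩
    rw [hτ] at hle
    have hic := Finset.card_insert_le v C
    constructor
    · intro hev
      have hev' : Even (E.card - Δ) := by
        rwa [← Int.even_coe_nat, Nat.cast_sub hΔe]
      have h2 : 2 * C.card ≤ F.card :=
        hC2 (by rw [show F.card = E.card - Δ from by omega]; exact hev')
      omega
    · intro _
      omega
end

section
/- Let H be a 2-intersecting r-uniform hypergraph and let k be a nonnegative integer. If kr + 2 < 2·|E(H)| (that is, (k/2)·r + 1 < |E(H)|), then H has a vertex of degree at least k + 2. -/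
/-- Let `H` be a 2-intersecting `r`-uniform hypergraph and `k` a nonnegative integer.
If `k·r + 2 < 2·|E(H)|`, then `H` has a vertex of degree at least `k + 2`. -/
theorem stmt4 {V : Type*} [DecidableEq V] (E : Finset (Finset V)) (r k : ℕ)
    (hunif : ∀ e ∈ E, e.card = r)
    (hint2 : ∀ e ∈ E, ∀ f ∈ E, e ≠ f → 2 ≤ (e ∩ f).card)
    (h : k * r + 2 < 2 * E.card) :
    ∃ v : V, k + 2 ≤ degree E v := by
  by_contra hc
  push_neg at hc
  have hE2 : 2 ≤ E.card := by
    have h2 : 2 ≤ k * r + 2 := Nat.le_add_left 2 (k * r)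
    omega
  obtain ⟨e, he⟩ : E.Nonempty := Finset.card_pos.mp (by omega)
  -- double counting
  have hsum : ∑ v ∈ e, degree E v = ∑ f ∈ E, (e ∩ f).card := by
    simp only [degree, Finset.card_filter]
    rw [Finset.sum_comm]
    refine Finset.sum_congr rfl fun f _ => ?_
    rw [← Finset.card_filter, Finset.filter_mem_eq_inter]
  have hlow : r + 2 * (E.card - 1) ≤ ∑ f ∈ E, (e ∩ f).card := by
    rw [← Finset.add_sum_erase _ _ he]
    have h1 : (e ∩ e).card = r := by simp [hunif e he]
    have h2 : ∑ _f ∈ E.erase e, 2 ≤ ∑ f ∈ E.erase e, (e ∩ f).card := by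
      refine Finset.sum_le_sum fun f hf => ?_
      exact hint2 e he f (Finset.mem_of_mem_erase hf)
        (Ne.symm (Finset.ne_of_mem_erase hf))
    rw [Finset.sum_const, smul_eq_mul, Finset.card_erase_of_mem he] at h2
    omega
  have hup : ∑ v ∈ e, degree E v ≤ (k + 1) * r := by
    calc ∑ v ∈ e, degree E v ≤ ∑ _v ∈ e, (k + 1) :=
          Finset.sum_le_sum fun v _ => by have := hc v; omega
      _ = e.card * (k + 1) := by rw [Finset.sum_const, smul_eq_mul]
      _ = (k + 1) * r := by rw [hunif e he, Nat.mul_comm]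
  have hkr : (k + 1) * r = k * r + r := by ring
  omega
end

section
/- There exists an integer r₀ such that for every r ≥ r₀, every 2-intersecting r-uniform hypergraph H with covering number τ(H) = r − 1 has more than 5r edges. -/
/-- There exists `r₀` such that for all `r ≥ r₀`, every 2-intersecting `r`-uniform hypergraph
with covering number `r − 1` has more than `5r` edges. -/
theorem stmt5 : ∃ r₀ : ℕ, ∀ r : ℕ, r₀ ≤ r →
    ∀ (V : Type) [DecidableEq V] (E : Finset (Finset V)),
      (∀ e ∈ E, e.card = r) →
      (∀ e ∈ E, ∀ f ∈ E, e ≠ f → 2 ≤ (e ∩ f).card) →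
      coverNumber E = r - 1 →
      5 * r < E.card := by
  classical
  use 13
  intro r hr V _ E huni hint hcov
  obtain ⟨e, he⟩ : E.Nonempty := by
    by_contra h
    rw [Finset.not_nonempty_iff_eq_empty] at h
    subst h
    have h0 : (0:ℕ) ∈ {n : ℕ | ∃ C : Finset V, C.card = n ∧ IsCover (∅ : Finset (Finset V)) C} :=
      ⟨∅, rfl, fun f hf => absurd hf (Finset.notMem_empty f)⟩
    have := Nat.sInf_le h0
    rw [coverNumber] at hcov
    omega
  have her : e.card = r := huni e he
  -- Every 2-element subset of e is realized as e ∩ f for some other edge f.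
  have key : ∀ p ∈ e.powersetCard 2, ∃ f ∈ E, f ≠ e ∧ e ∩ f = p := by
    intro p hp
    rw [Finset.mem_powersetCard] at hp
    obtain ⟨hpe, hp2⟩ := hp
    by_contra hno
    push_neg at hno
    have hcover : IsCover E (e \ p) := by
      intro f hf
      by_cases hfe : f = e
      · have hne : (e \ p).Nonempty := by
          rw [← Finset.card_pos, Finset.card_sdiff_of_subset hpe, her, hp2]; omega
        obtain ⟨v, hv⟩ := hne
        exact ⟨v, by rw [hfe]; exact (Finset.mem_sdiff.mp hv).1, hv⟩
      · have h2 : 2 ≤ (e ∩ f).card := hint e he f hf (Ne.symm hfe)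
        have hnep : e ∩ f ≠ p := hno f hf hfe
        have hnsub : ¬ (e ∩ f ⊆ p) := fun hsub =>
          hnep (Finset.eq_of_subset_of_card_le hsub (hp2 ▸ h2))
        obtain ⟨v, hv, hvp⟩ := Finset.not_subset.mp hnsub
        rw [Finset.mem_inter] at hv
        exact ⟨v, hv.2, Finset.mem_sdiff.mpr ⟨hv.1, hvp⟩⟩
    have hle : coverNumber E ≤ r - 2 := by
      apply Nat.sInf_le
      exact ⟨e \ p, by rw [Finset.card_sdiff_of_subset hpe, her, hp2], hcover⟩
    omega
  -- Injection from pairs of e into E.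
  set g : Finset V → Finset V := fun p =>
    if hp : ∃ f ∈ E, f ≠ e ∧ e ∩ f = p then hp.choose else ∅ with hg
  have hmem : ∀ p ∈ e.powersetCard 2, g p ∈ E ∧ e ∩ g p = p := by
    intro p hp
    have hex : ∃ f ∈ E, f ≠ e ∧ e ∩ f = p := key p hp
    simp only [hg, dif_pos hex]
    obtain ⟨h1, _, h3⟩ := hex.choose_spec
    exact ⟨h1, h3⟩
  have hcard : (e.powersetCard 2).card ≤ E.card := by
    apply Finset.card_le_card_of_injOn g (fun p hp => (hmem p hp).1)
    intro p hp q hq hpq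
    rw [← (hmem p hp).2, ← (hmem q hq).2, hpq]
  rw [Finset.card_powersetCard, her, Nat.choose_two_right] at hcard
  have h12 : 12 * r ≤ r * (r - 1) := by
    calc 12 * r = r * 12 := by ring
    _ ≤ r * (r - 1) := Nat.mul_le_mul_left r (by omega)
  have h6 : 6 * r ≤ r * (r - 1) / 2 := by omega
  omega
end

section
/- Let H be a 3-uniform 2-intersecting hypergraph with covering number τ(H) = 2. Then, after discarding isolated vertices (vertices lying on no edge), H is isomorphic to the hypergraph on a 4-element vertex set whose edges are all four 3-element subsets. -/
lemma aux_sub {V : Type*} [DecidableEq V] {g e : Finset V} {v : V}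
    (hg : g.card = 3) (he : e.card = 3) (hv : v ∈ g) (hve : v ∉ e)
    (hint : 2 ≤ (g ∩ e).card) : g ⊆ insert v e := by
  have h1 : g ∩ e ⊆ g.erase v := by
    intro x hx
    rw [Finset.mem_inter] at hx
    exact Finset.mem_erase.2 ⟨fun h => hve (h ▸ hx.2), hx.1⟩
  have h2 : (g.erase v).card = 2 := by
    rw [Finset.card_erase_of_mem hv, hg]
  have h3 : g ∩ e = g.erase v := Finset.eq_of_subset_of_card_le h1 (by omega)
  have h4 : g.erase v ⊆ e := h3 ▸ Finset.inter_subset_right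
  intro x hx
  rcases eq_or_ne x v with rfl | hxv
  · exact Finset.mem_insert_self _ _
  · exact Finset.mem_insert_of_mem (h4 (Finset.mem_erase.2 ⟨hxv, hx⟩))

/-- Every 3-uniform 2-intersecting hypergraph with covering number 2 is, after discarding
isolated vertices, the hypergraph of all four 3-element subsets of a 4-element vertex set. -/
theorem stmt6 {V : Type*} [DecidableEq V] (E : Finset (Finset V))
    (hunif : ∀ e ∈ E, e.card = 3)
    (hint2 : ∀ e ∈ E, ∀ f ∈ E, e ≠ f → 2 ≤ (e ∩ f).card)
    (hτ : coverNumber E = 2) :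
    ∃ S : Finset V, S.card = 4 ∧ E = S.powersetCard 3 := by
  have hne : {n : ℕ | ∃ C : Finset V, C.card = n ∧ IsCover E C}.Nonempty := by
    by_contra h
    rw [Set.not_nonempty_iff_eq_empty] at h
    unfold coverNumber at hτ
    rw [h, Nat.sInf_empty] at hτ
    exact absurd hτ (by norm_num)
  obtain ⟨C, hC2, hCcov⟩ : ∃ C : Finset V, C.card = 2 ∧ IsCover E C := by
    have h2 := Nat.sInf_mem hne
    unfold coverNumber at hτ
    rwa [hτ] at h2
  have hno : ∀ C : Finset V, IsCover E C → 2 ≤ C.card := by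
    intro C hC
    have hmem : C.card ∈ {n : ℕ | ∃ C : Finset V, C.card = n ∧ IsCover E C} := ⟨C, rfl, hC⟩
    have := Nat.sInf_le hmem
    unfold coverNumber at hτ
    omega
  have hmiss : ∀ v : V, ∃ e ∈ E, v ∉ e := by
    intro v
    by_contra h
    push_neg at h
    have hcv : IsCover E {v} := fun e he => ⟨v, h e he, Finset.mem_singleton_self v⟩
    have := hno _ hcv
    rw [Finset.card_singleton] at this
    omega
  obtain ⟨a, b, hab, hCab⟩ := Finset.card_eq_two.1 hC2
  have hcov : ∀ g ∈ E, a ∈ g ∨ b ∈ g := by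
    intro g hg
    obtain ⟨v, hv, hvC⟩ := hCcov g hg
    rw [hCab, Finset.mem_insert, Finset.mem_singleton] at hvC
    rcases hvC with rfl | rfl
    exacts [Or.inl hv, Or.inr hv]
  obtain ⟨e, heE, hae⟩ := hmiss a
  obtain ⟨f, hfE, hbf⟩ := hmiss b
  have he3 : e.card = 3 := hunif e heE
  have hf3 : f.card = 3 := hunif f hfE
  have hbe : b ∈ e := (hcov e heE).resolve_left hae
  have haf : a ∈ f := (hcov f hfE).resolve_right hbf
  have hef : e ≠ f := fun h => hae (h ▸ haf)
  have hint_ef : 2 ≤ (e ∩ f).card := hint2 e heE f hfE hef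
  have hTle : (e ∩ f).card ≤ 2 := by
    have hsub : e ∩ f ⊆ e.erase b := by
      intro x hx
      rw [Finset.mem_inter] at hx
      exact Finset.mem_erase.2 ⟨fun h => hbf (h ▸ hx.2), hx.1⟩
    have := Finset.card_le_card hsub
    rw [Finset.card_erase_of_mem hbe, he3] at this
    omega
  have hScard : (e ∪ f).card = 4 := by
    have := Finset.card_union_add_card_inter e f
    omega
  have hsubS : ∀ g ∈ E, g ⊆ e ∪ f := by
    intro g hg
    rcases hcov g hg with hag | hbg
    · have hgne : g ≠ e := fun h => hae (h ▸ hag)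
      have hsub := aux_sub (hunif g hg) he3 hag hae (hint2 g hg e heE hgne)
      intro x hx
      rcases Finset.mem_insert.1 (hsub hx) with rfl | hxe
      · exact Finset.mem_union_right _ haf
      · exact Finset.mem_union_left _ hxe
    · have hgne : g ≠ f := fun h => hbf (h ▸ hbg)
      have hsub := aux_sub (hunif g hg) hf3 hbg hbf (hint2 g hg f hfE hgne)
      intro x hx
      rcases Finset.mem_insert.1 (hsub hx) with rfl | hxf
      · exact Finset.mem_union_left _ hbe
      · exact Finset.mem_union_right _ hxf
  refine ⟨e ∪ f, hScard, ?_⟩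
  ext g
  rw [Finset.mem_powersetCard]
  constructor
  · intro hg
    exact ⟨hsubS g hg, hunif g hg⟩
  · rintro ⟨hgS, hg3⟩
    obtain ⟨w, hwS, hwg⟩ : ∃ w ∈ e ∪ f, w ∉ g := by
      by_contra h
      push_neg at h
      have := Finset.card_le_card h
      omega
    have herase : ((e ∪ f).erase w).card = 3 := by
      rw [Finset.card_erase_of_mem hwS, hScard]
    have hgsub : g ⊆ (e ∪ f).erase w := fun x hx =>
      Finset.mem_erase.2 ⟨fun h => hwg (h ▸ hx), hgS hx⟩
    have hge : g = (e ∪ f).erase w := Finset.eq_of_subset_of_card_le hgsub (by omega)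
    obtain ⟨g', hg'E, hwg'⟩ := hmiss w
    have hg'sub : g' ⊆ (e ∪ f).erase w := fun x hx =>
      Finset.mem_erase.2 ⟨fun h => hwg' (h ▸ hx), hsubS g' hg'E hx⟩
    have hg'eq : g' = (e ∪ f).erase w :=
      Finset.eq_of_subset_of_card_le hg'sub (by rw [herase, hunif g' hg'E])
    rw [hge, ← hg'eq]
    exact hg'E
end

section
/- Let n, m ≥ 2 and let H be the hypergraph whose vertex set is the n × m grid {(i,j) : 1 ≤ i ≤ n, 1 ≤ j ≤ m} and whose edges are the crosses C(a,b) = {(a,j) : 1 ≤ j ≤ m} ∪ {(i,b) : 1 ≤ i ≤ n}, one for each grid point (a,b). Then H is (n + m − 1)-uniform, 2-intersecting, and has covering number τ(H) = min(n, m). -/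
/-- The cross through the grid point `(a, b)`: all points in row `a` or column `b`. -/
def cross (n m : ℕ) (ab : Fin n × Fin m) : Finset (Fin n × Fin m) :=
  Finset.univ.filter (fun p => p.1 = ab.1 ∨ p.2 = ab.2)

/-- The hypergraph of all crosses of the `n × m` grid. -/
def gridCrosses (n m : ℕ) : Finset (Finset (Fin n × Fin m)) :=
  Finset.univ.image (cross n m)

lemma mem_cross {n m : ℕ} (ab p : Fin n × Fin m) :
    p ∈ cross n m ab ↔ p.1 = ab.1 ∨ p.2 = ab.2 := by
  simp [cross]

lemma cross_card {n m : ℕ} (ab : Fin n × Fin m) :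
    (cross n m ab).card = n + m - 1 := by
  obtain ⟨a, b⟩ := ab
  have h1 : cross n m (a, b) = ({a} ×ˢ Finset.univ) ∪ (Finset.univ ×ˢ {b}) := by
    ext p; simp [mem_cross, Finset.mem_product, Prod.ext_iff, eq_comm]
  have h2 : (({a} ×ˢ (Finset.univ : Finset (Fin m))) ∩ ((Finset.univ : Finset (Fin n)) ×ˢ {b}))
      = {(a, b)} := by
    ext p; simp [Prod.ext_iff, eq_comm]
  have h3 := Finset.card_union_add_card_inter ({a} ×ˢ (Finset.univ : Finset (Fin m)))
      ((Finset.univ : Finset (Fin n)) ×ˢ {b})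
  rw [h2] at h3
  rw [Finset.card_product, Finset.card_product] at h3
  simp only [Finset.card_singleton, Finset.card_univ, Fintype.card_fin] at h3
  have hn : 0 < n := a.pos
  have hm : 0 < m := b.pos
  rw [h1]
  omega

/-- For `n, m ≥ 2`, the hypergraph of crosses of the `n × m` grid is `(n + m − 1)`-uniform,
2-intersecting, and has covering number `min n m`. -/
theorem stmt9 (n m : ℕ) (hn : 2 ≤ n) (hm : 2 ≤ m) :
    (∀ e ∈ gridCrosses n m, e.card = n + m - 1) ∧
    (∀ e ∈ gridCrosses n m, ∀ f ∈ gridCrosses n m, e ≠ f → 2 ≤ (e ∩ f).card) ∧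
    coverNumber (gridCrosses n m) = min n m := by
  refine ⟨?_, ?_, ?_⟩
  · rintro e he
    simp only [gridCrosses, Finset.mem_image] at he
    obtain ⟨ab, -, rfl⟩ := he
    exact cross_card ab
  · rintro e he f hf hef
    simp only [gridCrosses, Finset.mem_image] at he hf
    obtain ⟨⟨a, b⟩, -, rfl⟩ := he
    obtain ⟨⟨a', b'⟩, -, rfl⟩ := hf
    have h1 : (a, b') ∈ cross n m (a, b) ∩ cross n m (a', b') := by
      simp [mem_cross]
    have h2 : (a', b) ∈ cross n m (a, b) ∩ cross n m (a', b') := by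
      simp [mem_cross]
    have hne : (a, b') ≠ (a', b) := by
      rintro h
      injection h with h1' h2'
      subst h1'; subst h2'
      exact hef rfl
    calc 2 = ({(a, b'), (a', b)} : Finset (Fin n × Fin m)).card := by
              rw [Finset.card_insert_of_notMem (by simpa using hne), Finset.card_singleton]
      _ ≤ _ := Finset.card_le_card (by
              intro x hx; simp at hx; rcases hx with rfl | rfl <;> assumption)
  · -- cover number
    have hcov : ∃ C : Finset (Fin n × Fin m), C.card = min n m ∧ IsCover (gridCrosses n m) C := by
      rcases le_or_gt n m with h | h
      · refine ⟨Finset.univ.image (fun i : Fin n => (i, Fin.castLE h i)), ?_, ?_⟩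
        · rw [Finset.card_image_of_injective _ (fun i j hij => by simpa using congrArg Prod.fst hij)]
          simp [h]
        · rintro e he
          simp only [gridCrosses, Finset.mem_image] at he
          obtain ⟨⟨a, b⟩, -, rfl⟩ := he
          exact ⟨(a, Fin.castLE h a), by simp [mem_cross], by simp⟩
      · refine ⟨Finset.univ.image (fun j : Fin m => (Fin.castLE h.le j, j)), ?_, ?_⟩
        · rw [Finset.card_image_of_injective _ (fun i j hij => by simpa using congrArg Prod.snd hij)]
          simp [Nat.min_eq_right h.le]
        · rintro e he
          simp only [gridCrosses, Finset.mem_image] at he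
          obtain ⟨⟨a, b⟩, -, rfl⟩ := he
          exact ⟨(Fin.castLE h.le b, b), by simp [mem_cross], by simp⟩
    obtain ⟨C₀, hC₀card, hC₀⟩ := hcov
    have hmem : min n m ∈ {k : ℕ | ∃ C : Finset (Fin n × Fin m), C.card = k ∧ IsCover (gridCrosses n m) C} :=
      ⟨C₀, hC₀card, hC₀⟩
    refine le_antisymm (Nat.sInf_le hmem) ?_
    refine le_csInf ⟨_, hmem⟩ ?_
    rintro k ⟨C, rfl, hC⟩
    by_contra hlt
    push_neg at hlt
    have hrn : (C.image Prod.fst).card < n := lt_of_le_of_lt (Finset.card_image_le) (lt_of_lt_of_le hlt (min_le_left _ _))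
    have hrm : (C.image Prod.snd).card < m := lt_of_le_of_lt (Finset.card_image_le) (lt_of_lt_of_le hlt (min_le_right _ _))
    obtain ⟨a, ha⟩ : ∃ a : Fin n, a ∉ C.image Prod.fst := by
      by_contra h; push_neg at h
      have := Finset.card_le_card (fun x _ => h x : (Finset.univ : Finset (Fin n)) ⊆ _)
      simp at this; omega
    obtain ⟨b, hb⟩ : ∃ b : Fin m, b ∉ C.image Prod.snd := by
      by_contra h; push_neg at h
      have := Finset.card_le_card (fun x _ => h x : (Finset.univ : Finset (Fin m)) ⊆ _)
      simp at this; omega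
    obtain ⟨v, hv, hvC⟩ := hC (cross n m (a, b)) (by simp [gridCrosses])
    rw [mem_cross] at hv
    rcases hv with hv | hv
    · exact ha (Finset.mem_image.mpr ⟨v, hvC, hv⟩)
    · exact hb (Finset.mem_image.mpr ⟨v, hvC, hv⟩)
end

section
/- Let H be the Kummer configuration: the vertex set is the 4 × 4 grid {(i,j) : 1 ≤ i, j ≤ 4}, and for each grid point (a,b) there is an edge consisting of the 3 other points in row a together with the 3 other points in column b, i.e., {(a,j) : j ≠ b} ∪ {(i,b) : i ≠ a}. Then H is 6-uniform, 2-intersecting, and has covering number τ(H) = 4. -/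
/-- The Kummer edge through `(a, b)`: the 3 other points of row `a` together with the
3 other points of column `b`. -/
def kummerEdge (ab : Fin 4 × Fin 4) : Finset (Fin 4 × Fin 4) :=
  Finset.univ.filter (fun p =>
    (p.1 = ab.1 ∧ p.2 ≠ ab.2) ∨ (p.2 = ab.2 ∧ p.1 ≠ ab.1))

/-- The Kummer configuration: one edge for each point of the `4 × 4` grid. -/
def kummer : Finset (Finset (Fin 4 × Fin 4)) :=
  Finset.univ.image kummerEdge

lemma kummer_edge_card : ∀ ab : Fin 4 × Fin 4, (kummerEdge ab).card = 6 := by decide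

lemma kummer_inter : ∀ ab cd : Fin 4 × Fin 4,
    2 ≤ (kummerEdge ab ∩ kummerEdge cd).card := by decide

set_option maxHeartbeats 2000000 in
lemma kummer_avoid : ∀ a b c : Fin 4 × Fin 4, ∃ ab : Fin 4 × Fin 4,
    ∀ v ∈ kummerEdge ab, v ≠ a ∧ v ≠ b ∧ v ≠ c := by decide

lemma kummer_row_cover : ∀ ab : Fin 4 × Fin 4, ∃ v ∈ kummerEdge ab,
    v ∈ ({((0:Fin 4),(0:Fin 4)),(0,1),(0,2),(0,3)} : Finset (Fin 4 × Fin 4)) := by decide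

lemma subset_three {α : Type*} [DecidableEq α] [Nonempty α] (C : Finset α)
    (h : C.card ≤ 3) : ∃ a b c, C ⊆ {a, b, c} := by
  obtain ⟨x⟩ := (inferInstance : Nonempty α)
  refine ⟨C.toList.getD 0 x, C.toList.getD 1 x, C.toList.getD 2 x, ?_⟩
  intro v hv
  have hl : v ∈ C.toList := Finset.mem_toList.2 hv
  obtain ⟨i, hi, he⟩ := List.getElem_of_mem hl
  have hlen : C.toList.length ≤ 3 := by rw [Finset.length_toList]; exact h
  have hi3 : i < 3 := lt_of_lt_of_le hi hlen
  simp only [Finset.mem_insert, Finset.mem_singleton]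
  interval_cases i
  · left; rw [List.getD_eq_getElem _ _ hi]; exact he.symm
  · right; left; rw [List.getD_eq_getElem _ _ hi]; exact he.symm
  · right; right; rw [List.getD_eq_getElem _ _ hi]; exact he.symm

/-- The Kummer configuration is 6-uniform, 2-intersecting, and has covering number 4. -/
theorem stmt10 :
    (∀ e ∈ kummer, e.card = 6) ∧
    (∀ e ∈ kummer, ∀ f ∈ kummer, e ≠ f → 2 ≤ (e ∩ f).card) ∧
    coverNumber kummer = 4 := by
  refine ⟨?_, ?_, ?_⟩
  · intro e he
    obtain ⟨ab, -, rfl⟩ := Finset.mem_image.1 he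
    exact kummer_edge_card ab
  · intro e he f hf _
    obtain ⟨ab, -, rfl⟩ := Finset.mem_image.1 he
    obtain ⟨cd, -, rfl⟩ := Finset.mem_image.1 hf
    exact kummer_inter ab cd
  · have h4mem : 4 ∈ {n : ℕ | ∃ C : Finset (Fin 4 × Fin 4), C.card = n ∧ IsCover kummer C} := by
      refine ⟨{(0,0),(0,1),(0,2),(0,3)}, by decide, ?_⟩
      intro e he
      obtain ⟨ab, -, rfl⟩ := Finset.mem_image.1 he
      exact kummer_row_cover ab
    have hlb : ∀ n ∈ {n : ℕ | ∃ C : Finset (Fin 4 × Fin 4), C.card = n ∧ IsCover kummer C},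
        4 ≤ n := by
      rintro n ⟨C, rfl, hcov⟩
      by_contra hlt
      push_neg at hlt
      have h3 : C.card ≤ 3 := Nat.lt_succ_iff.mp hlt
      obtain ⟨a, b, c, hsub⟩ := subset_three C h3
      obtain ⟨ab, hab⟩ := kummer_avoid a b c
      obtain ⟨v, hv, hvC⟩ := hcov (kummerEdge ab)
        (Finset.mem_image.2 ⟨ab, Finset.mem_univ _, rfl⟩)
      obtain ⟨hna, hnb, hnc⟩ := hab v hv
      have := hsub hvC
      simp only [Finset.mem_insert, Finset.mem_singleton] at this
      rcases this with h | h | h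
      · exact hna h
      · exact hnb h
      · exact hnc h
    exact le_antisymm (Nat.sInf_le h4mem) (le_csInf ⟨4, h4mem⟩ hlb)
end

section
/- Let P be a projective plane of order 2 (7 points and 7 lines, each line containing 3 points, any two points on exactly one common line, any two lines meeting in exactly one point), and let H be the hypergraph on the 7 points whose edges are the complements of the 7 lines. Then H is 4-uniform, 2-intersecting, and has covering number τ(H) = 3. -/
/-- Let `L` be the lines of a projective plane of order 2 on a point set `P` (7 points,
7 lines, each line with 3 points, each point on 3 lines, two points on exactly one line,
two lines meeting in exactly one point). The hypergraph of complements of the lines is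
4-uniform, 2-intersecting, and has covering number 3. -/
theorem stmt11 {P : Type*} [Fintype P] [DecidableEq P]
    (L : Finset (Finset P))
    (hP : Fintype.card P = 7) (hL : L.card = 7)
    (hlinecard : ∀ l ∈ L, l.card = 3)
    (hptdeg : ∀ p : P, (L.filter (fun l => p ∈ l)).card = 3)
    (hpts : ∀ p q : P, p ≠ q → (L.filter (fun l => p ∈ l ∧ q ∈ l)).card = 1)
    (hlines : ∀ l₁ ∈ L, ∀ l₂ ∈ L, l₁ ≠ l₂ → (l₁ ∩ l₂).card = 1) :
    (∀ e ∈ L.image (fun l => lᶜ), e.card = 4) ∧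
    (∀ e ∈ L.image (fun l => lᶜ), ∀ f ∈ L.image (fun l => lᶜ), e ≠ f → 2 ≤ (e ∩ f).card) ∧
    coverNumber (L.image (fun l => lᶜ)) = 3 := by
  -- any small set is covered by a line
  have hsmall : ∀ C : Finset P, C.card ≤ 2 → ∃ l ∈ L, C ⊆ l := by
    intro C hC
    interval_cases h : C.card
    · obtain ⟨l, hl⟩ : L.Nonempty := by
        rw [← Finset.card_pos, hL]; norm_num
      exact ⟨l, hl, by simp [Finset.card_eq_zero.mp h]⟩
    · obtain ⟨p, rfl⟩ := Finset.card_eq_one.mp h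
      have h3 : (L.filter (fun l => p ∈ l)).Nonempty := by
        rw [← Finset.card_pos, hptdeg]; norm_num
      obtain ⟨l, hl⟩ := h3
      rw [Finset.mem_filter] at hl
      exact ⟨l, hl.1, by simpa using hl.2⟩
    · obtain ⟨p, q, hpq, rfl⟩ := Finset.card_eq_two.mp h
      have h1 : (L.filter (fun l => p ∈ l ∧ q ∈ l)).Nonempty := by
        rw [← Finset.card_pos, hpts p q hpq]; norm_num
      obtain ⟨l, hl⟩ := h1
      rw [Finset.mem_filter] at hl
      refine ⟨l, hl.1, ?_⟩
      intro x hx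
      rcases Finset.mem_insert.mp hx with rfl | hx
      · exact hl.2.1
      · rw [Finset.mem_singleton] at hx; subst hx; exact hl.2.2
  have huniform : ∀ e ∈ L.image (fun l => lᶜ), e.card = 4 := by
    intro e he
    obtain ⟨l, hl, rfl⟩ := Finset.mem_image.mp he
    rw [Finset.card_compl, hP, hlinecard l hl]
  refine ⟨huniform, ?_, ?_⟩
  · intro e he f hf hef
    obtain ⟨l₁, hl₁, rfl⟩ := Finset.mem_image.mp he
    obtain ⟨l₂, hl₂, rfl⟩ := Finset.mem_image.mp hf
    have hne : l₁ ≠ l₂ := fun h => hef (by rw [h])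
    have hu : (l₁ ∪ l₂).card = 5 := by
      have := Finset.card_union_add_card_inter l₁ l₂
      rw [hlines l₁ hl₁ l₂ hl₂ hne, hlinecard l₁ hl₁, hlinecard l₂ hl₂] at this
      omega
    have : l₁ᶜ ∩ l₂ᶜ = (l₁ ∪ l₂)ᶜ := by
      ext x; simp [and_comm]
    rw [this, Finset.card_compl, hP, hu]
  · -- covering number
    -- find a cover of size 3
    obtain ⟨p, q, hpq⟩ := Fintype.exists_pair_of_one_lt_card (α := P) (by omega)
    have h1 := hpts p q hpq
    obtain ⟨l₀, hl₀mem⟩ := Finset.card_eq_one.mp h1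
    have hl₀ : l₀ ∈ L ∧ p ∈ l₀ ∧ q ∈ l₀ := by
      have : l₀ ∈ L.filter (fun l => p ∈ l ∧ q ∈ l) := by rw [hl₀mem]; simp
      simpa using this
    obtain ⟨r, hr⟩ : (l₀ᶜ).Nonempty := by
      rw [← Finset.card_pos, Finset.card_compl, hP, hlinecard l₀ hl₀.1]; norm_num
    rw [Finset.mem_compl] at hr
    have hrp : r ≠ p := fun h => hr (h ▸ hl₀.2.1)
    have hrq : r ≠ q := fun h => hr (h ▸ hl₀.2.2)
    have hcard3 : ({p, q, r} : Finset P).card = 3 := by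
      rw [Finset.card_insert_of_notMem (by simp [hpq, Ne.symm hrp]),
        Finset.card_insert_of_notMem (by simp [Ne.symm hrq])]
      simp
    have hcov : IsCover (L.image (fun l => lᶜ)) {p, q, r} := by
      intro e he
      obtain ⟨l, hl, rfl⟩ := Finset.mem_image.mp he
      by_contra hcon
      push_neg at hcon
      have hall : ∀ v ∈ ({p, q, r} : Finset P), v ∈ l := by
        intro v hv
        by_contra hvl
        exact hcon v (Finset.mem_compl.mpr hvl) hv
      have hpl : p ∈ l := hall p (by simp)
      have hql : q ∈ l := hall q (by simp)
      have hrl : r ∈ l := hall r (by simp)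
      have : l ∈ L.filter (fun l => p ∈ l ∧ q ∈ l) := by
        simp [hl, hpl, hql]
      rw [hl₀mem, Finset.mem_singleton] at this
      exact hr (this ▸ hrl)
    have h3mem : (3 : ℕ) ∈ {n : ℕ | ∃ C : Finset P, C.card = n ∧
        IsCover (L.image (fun l => lᶜ)) C} := ⟨{p, q, r}, hcard3, hcov⟩
    refine le_antisymm (Nat.sInf_le h3mem) (le_csInf ⟨3, h3mem⟩ ?_)
    rintro n ⟨C, hCcard, hCcov⟩
    by_contra hlt
    push_neg at hlt
    have : C.card ≤ 2 := by omega
    obtain ⟨l, hlL, hCl⟩ := hsmall C this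
    obtain ⟨v, hv1, hv2⟩ := hCcov lᶜ (Finset.mem_image_of_mem _ hlL)
    exact (Finset.mem_compl.mp hv1) (hCl hv2)
end

section
/- Any 9 lines of a projective plane of order 3 can be covered by 3 points; that is, for every set S of 9 lines of a projective plane of order 3, there exist 3 points such that every line in S contains at least one of them. -/
private lemma card_union3_aux {α : Type*} [DecidableEq α] (X Y Z : Finset α) :
    X.card + Y.card + Z.card ≤ (X ∪ Y ∪ Z).card + (X ∩ Y).card + (X ∩ Z).card + (Y ∩ Z).card := by
  have h1 := Finset.card_union_add_card_inter X Y
  have h2 := Finset.card_union_add_card_inter (X ∪ Y) Z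
  have h3 : ((X ∪ Y) ∩ Z).card ≤ (X ∩ Z).card + (Y ∩ Z).card := by
    rw [Finset.union_inter_distrib_right]; exact Finset.card_union_le _ _
  omega

/-- Any 9 lines of a projective plane of order 3 (13 points, 13 lines, each line with
4 points, each point on 4 lines, two points on exactly one line, two lines meeting in
exactly one point) can be covered by 3 points. -/
theorem stmt12 {P : Type*} [Fintype P] [DecidableEq P]
    (L : Finset (Finset P))
    (hP : Fintype.card P = 13) (hL : L.card = 13)
    (hlinecard : ∀ l ∈ L, l.card = 4)
    (hptdeg : ∀ p : P, (L.filter (fun l => p ∈ l)).card = 4)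
    (hpts : ∀ p q : P, p ≠ q → (L.filter (fun l => p ∈ l ∧ q ∈ l)).card = 1)
    (hlines : ∀ l₁ ∈ L, ∀ l₂ ∈ L, l₁ ≠ l₂ → (l₁ ∩ l₂).card = 1)
    (S : Finset (Finset P)) (hS : S ⊆ L) (hS9 : S.card = 9) :
    ∃ p₁ p₂ p₃ : P, ∀ l ∈ S, p₁ ∈ l ∨ p₂ ∈ l ∨ p₃ ∈ l := by
  classical
  set T := L \ S with hTdef
  have hTL : T ⊆ L := Finset.sdiff_subset
  have hT4 : T.card = 4 := by
    rw [hTdef, Finset.card_sdiff_of_subset hS, hL, hS9]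
  by_cases hA : ∃ q : P, 3 ≤ (T.filter (fun t => q ∈ t)).card
  · -- Case A: some point q lies on ≥ 3 lines of T
    obtain ⟨q, hq⟩ := hA
    have hdisj : Disjoint (S.filter (fun l => q ∈ l)) (T.filter (fun l => q ∈ l)) :=
      Finset.disjoint_filter_filter Finset.disjoint_sdiff
    have hsplit : (S.filter (fun l => q ∈ l)) ∪ (T.filter (fun l => q ∈ l))
        = L.filter (fun l => q ∈ l) := by
      rw [← Finset.filter_union, hTdef, Finset.union_sdiff_of_subset hS]
    have hcards : (S.filter (fun l => q ∈ l)).card + (T.filter (fun l => q ∈ l)).card = 4 := by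
      rw [← Finset.card_union_of_disjoint hdisj, hsplit, hptdeg q]
    have hS1 : (S.filter (fun l => q ∈ l)).card ≤ 1 := by omega
    obtain ⟨m, hmL, hqm, hmuniq⟩ :
        ∃ m, m ∈ L ∧ q ∈ m ∧ ∀ l ∈ S, q ∈ l → l = m := by
      rcases (S.filter (fun l => q ∈ l)).eq_empty_or_nonempty with he | ⟨m, hm⟩
      · have hLq : (L.filter (fun l => q ∈ l)).Nonempty := by
          rw [← Finset.card_pos, hptdeg]; norm_num
        obtain ⟨m, hm⟩ := hLq
        rw [Finset.mem_filter] at hm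
        refine ⟨m, hm.1, hm.2, fun l hl hql => ?_⟩
        exact absurd (Finset.mem_filter.mpr ⟨hl, hql⟩) (by rw [he]; exact Finset.notMem_empty l)
      · have hm' := Finset.mem_filter.mp hm
        refine ⟨m, hS hm'.1, hm'.2, fun l hl hql => ?_⟩
        exact Finset.card_le_one.mp hS1 l (Finset.mem_filter.mpr ⟨hl, hql⟩) m hm
    have h3 : (m.erase q).card = 3 := by
      rw [Finset.card_erase_of_mem hqm, hlinecard m hmL]
    obtain ⟨p₁, p₂, p₃, -, -, -, hpe⟩ := Finset.card_eq_three.mp h3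
    refine ⟨p₁, p₂, p₃, fun l hl => ?_⟩
    by_cases hlm : l = m
    · subst hlm
      left
      have : p₁ ∈ l.erase q := by rw [hpe]; simp
      exact Finset.mem_of_mem_erase this
    · have hql : q ∉ l := fun h => hlm (hmuniq l hl h)
      have hcard : (l ∩ m).card = 1 := hlines l (hS hl) m hmL hlm
      obtain ⟨x, hx⟩ := Finset.card_pos.mp (by omega : 0 < (l ∩ m).card)
      rw [Finset.mem_inter] at hx
      have hxq : x ≠ q := fun h => hql (h ▸ hx.1)
      have : x ∈ m.erase q := Finset.mem_erase.mpr ⟨hxq, hx.2⟩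
      rw [hpe] at this
      simp only [Finset.mem_insert, Finset.mem_singleton] at this
      rcases this with rfl | rfl | rfl
      · exact Or.inl hx.1
      · exact Or.inr (Or.inl hx.1)
      · exact Or.inr (Or.inr hx.1)
  · -- Case B: every point lies on ≤ 2 lines of T
    push_neg at hA
    have hA2 : ∀ q : P, (T.filter (fun t => q ∈ t)).card ≤ 2 := fun q => by
      have := hA q; omega
    have hne : Nonempty P := Fintype.card_pos_iff.mp (by omega)
    haveI := Classical.inhabited_of_nonempty hne
    -- double counting: total incidences with T-lines is 16
    have hsum : ∑ q : P, (T.filter (fun t => q ∈ t)).card = 16 := by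
      have h1 : ∑ q : P, (T.filter (fun t => q ∈ t)).card = ∑ t ∈ T, t.card := by
        simp_rw [Finset.card_filter]
        rw [Finset.sum_comm]
        refine Finset.sum_congr rfl fun t _ => ?_
        rw [← Finset.card_filter]
        congr 1
        ext x; simp
      rw [h1, Finset.sum_congr rfl (fun t ht => hlinecard t (hTL ht)), Finset.sum_const, hT4]; rfl
    set D : Finset P := Finset.univ.filter (fun q => 1 ≤ (T.filter (fun t => q ∈ t)).card)
      with hDdef
    set D2 : Finset P := Finset.univ.filter (fun q => 2 ≤ (T.filter (fun t => q ∈ t)).card)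
      with hD2def
    -- the map sending a pair of distinct T-lines to a common point
    set g : Finset P × Finset P → P :=
      fun p => if h : (p.1 ∩ p.2).Nonempty then h.choose else default with hgdef
    have hg : ∀ p ∈ T.offDiag, g p ∈ p.1 ∧ g p ∈ p.2 := by
      intro p hp
      rw [Finset.mem_offDiag] at hp
      have hcard : (p.1 ∩ p.2).card = 1 := hlines p.1 (hTL hp.1) p.2 (hTL hp.2.1) hp.2.2
      have hnonempty : (p.1 ∩ p.2).Nonempty := Finset.card_pos.mp (by omega)
      have := hnonempty.choose_spec
      rw [Finset.mem_inter] at this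
      rw [hgdef]; simp only [dif_pos hnonempty]; exact this
    have himg : T.offDiag.image g ⊆ D2 := by
      intro x hx
      obtain ⟨p, hp, rfl⟩ := Finset.mem_image.mp hx
      have hgp := hg p hp
      rw [Finset.mem_offDiag] at hp
      rw [hD2def, Finset.mem_filter]
      refine ⟨Finset.mem_univ _, ?_⟩
      have hsub : ({p.1, p.2} : Finset (Finset P)) ⊆ T.filter (fun t => g p ∈ t) := by
        intro t ht
        simp only [Finset.mem_insert, Finset.mem_singleton] at ht
        rcases ht with rfl | rfl
        · exact Finset.mem_filter.mpr ⟨hp.1, hgp.1⟩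
        · exact Finset.mem_filter.mpr ⟨hp.2.1, hgp.2⟩
      calc 2 = ({p.1, p.2} : Finset (Finset P)).card := (Finset.card_pair hp.2.2).symm
        _ ≤ _ := Finset.card_le_card hsub
    have hfib : ∀ x ∈ T.offDiag.image g, (T.offDiag.filter (fun p => g p = x)).card ≤ 2 := by
      intro x _
      have hsub : T.offDiag.filter (fun p => g p = x)
          ⊆ (T.filter (fun t => x ∈ t)).offDiag := by
        intro p hp
        rw [Finset.mem_filter] at hp
        have hgp := hg p hp.1
        rw [Finset.mem_offDiag] at hp ⊢
        obtain ⟨⟨h1, h2, h3⟩, hgx⟩ := hp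
        exact ⟨Finset.mem_filter.mpr ⟨h1, hgx ▸ hgp.1⟩,
          Finset.mem_filter.mpr ⟨h2, hgx ▸ hgp.2⟩, h3⟩
      have hc := hA2 x
      calc (T.offDiag.filter (fun p => g p = x)).card
          ≤ ((T.filter (fun t => x ∈ t)).offDiag).card := Finset.card_le_card hsub
        _ = (T.filter (fun t => x ∈ t)).card * (T.filter (fun t => x ∈ t)).card
            - (T.filter (fun t => x ∈ t)).card := Finset.offDiag_card _
        _ ≤ 2 := by interval_cases h : (T.filter (fun t => x ∈ t)).card <;> omega
    have h12 : T.offDiag.card ≤ 2 * (T.offDiag.image g).card :=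
      Finset.card_le_mul_card_image _ 2 hfib
    have hoff : T.offDiag.card = 12 := by rw [Finset.offDiag_card, hT4]
    have hD2card : 6 ≤ D2.card := by
      have := Finset.card_le_card himg; omega
    -- sum over D of degrees is 16, and ≥ |D| + |D2|
    have hDsum : ∑ q ∈ D, (T.filter (fun t => q ∈ t)).card = 16 := by
      rw [← hsum]
      apply Finset.sum_subset (Finset.subset_univ D)
      intro q _ hq
      rw [hDdef, Finset.mem_filter] at hq
      push_neg at hq
      have := hq (Finset.mem_univ q)
      omega
    have hD2D : D2 ⊆ D := by
      intro q hq
      rw [hD2def, Finset.mem_filter] at hq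
      rw [hDdef, Finset.mem_filter]
      exact ⟨hq.1, by omega⟩
    have hsplitsum : ∑ q ∈ D \ D2, (T.filter (fun t => q ∈ t)).card
        + ∑ q ∈ D2, (T.filter (fun t => q ∈ t)).card = 16 := by
      rw [Finset.sum_sdiff hD2D, hDsum]
    have hb1 : D2.card * 2 ≤ ∑ q ∈ D2, (T.filter (fun t => q ∈ t)).card := by
      have := Finset.card_nsmul_le_sum D2 (fun q => (T.filter (fun t => q ∈ t)).card) 2
        (fun x hx => by rw [hD2def, Finset.mem_filter] at hx; exact hx.2)
      simpa using this
    have hb2 : (D \ D2).card * 1 ≤ ∑ q ∈ D \ D2, (T.filter (fun t => q ∈ t)).card := by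
      have := Finset.card_nsmul_le_sum (D \ D2) (fun q => (T.filter (fun t => q ∈ t)).card) 1
        (fun x hx => by
          have hx' := Finset.mem_sdiff.mp hx
          have := Finset.mem_filter.mp (hDdef ▸ hx'.1)
          exact this.2)
      simpa using this
    have hcardsdiff : (D \ D2).card = D.card - D2.card := Finset.card_sdiff_of_subset hD2D
    have hDcard : D.card ≤ 10 := by
      have hle := Finset.card_le_card hD2D
      omega
    -- at least 3 untouched points
    have hUcard : 3 ≤ (Finset.univ \ D).card := by
      rw [Finset.card_sdiff_of_subset (Finset.subset_univ D), Finset.card_univ, hP]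
      omega
    obtain ⟨V, hVsub, hV3⟩ := Finset.exists_subset_card_eq hUcard
    obtain ⟨p₁, p₂, p₃, h12', h13', h23', hVeq⟩ := Finset.card_eq_three.mp hV3
    have hfree : ∀ p ∈ V, ∀ t ∈ T, p ∉ t := by
      intro p hp t ht hpt
      have := Finset.mem_sdiff.mp (hVsub hp)
      apply this.2
      rw [hDdef, Finset.mem_filter]
      refine ⟨Finset.mem_univ _, ?_⟩
      have : t ∈ T.filter (fun t => p ∈ t) := Finset.mem_filter.mpr ⟨ht, hpt⟩
      exact Finset.card_pos.mpr ⟨t, this⟩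
    have hp1 : p₁ ∈ V := by rw [hVeq]; simp
    have hp2 : p₂ ∈ V := by rw [hVeq]; simp
    have hp3 : p₃ ∈ V := by rw [hVeq]; simp
    -- the lines through p₁, p₂, p₃ are exactly S
    set A : Finset (Finset P) := L.filter (fun l => p₁ ∈ l ∨ p₂ ∈ l ∨ p₃ ∈ l) with hAdef
    have hAS : A ⊆ S := by
      intro l hl
      rw [hAdef, Finset.mem_filter] at hl
      by_contra hlS
      have hlT : l ∈ T := Finset.mem_sdiff.mpr ⟨hl.1, hlS⟩
      rcases hl.2 with h | h | h
      · exact hfree p₁ hp1 l hlT h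
      · exact hfree p₂ hp2 l hlT h
      · exact hfree p₃ hp3 l hlT h
    have hAcard : 9 ≤ A.card := by
      have hAeq : A = L.filter (fun l => p₁ ∈ l) ∪ L.filter (fun l => p₂ ∈ l)
          ∪ L.filter (fun l => p₃ ∈ l) := by
        rw [hAdef, Finset.filter_or, Finset.filter_or, Finset.union_assoc]
      have hi12 : (L.filter (fun l => p₁ ∈ l) ∩ L.filter (fun l => p₂ ∈ l)).card = 1 := by
        rw [← Finset.filter_and]; exact hpts p₁ p₂ h12'
      have hi13 : (L.filter (fun l => p₁ ∈ l) ∩ L.filter (fun l => p₃ ∈ l)).card = 1 := by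
        rw [← Finset.filter_and]; exact hpts p₁ p₃ h13'
      have hi23 : (L.filter (fun l => p₂ ∈ l) ∩ L.filter (fun l => p₃ ∈ l)).card = 1 := by
        rw [← Finset.filter_and]; exact hpts p₂ p₃ h23'
      have hunion := card_union3_aux (L.filter (fun l => p₁ ∈ l))
        (L.filter (fun l => p₂ ∈ l)) (L.filter (fun l => p₃ ∈ l))
      rw [hptdeg p₁, hptdeg p₂, hptdeg p₃, hi12, hi13, hi23] at hunion
      rw [hAeq]
      omega
    have hASeq : A = S := Finset.eq_of_subset_of_card_le hAS (by omega)
    refine ⟨p₁, p₂, p₃, fun l hl => ?_⟩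
    rw [← hASeq, hAdef, Finset.mem_filter] at hl
    exact hl.2
end

section
/- Every 5-uniform intersecting hypergraph with exactly 11 edges has covering number at most 4. -/
lemma pairCover {V : Type*} [DecidableEq V] (F : Finset (Finset V))
    (hne : ∀ e ∈ F, e.Nonempty)
    (hint : ∀ e ∈ F, ∀ f ∈ F, e ≠ f → (e ∩ f).Nonempty) :
    ∃ C : Finset V, C.card ≤ (F.card + 1) / 2 ∧ IsCover F C := by
  induction F using Finset.strongInduction with
  | _ F ih =>
    rcases Finset.eq_empty_or_nonempty F with rfl | ⟨e, he⟩
    · exact ⟨∅, by simp, by intro f hf; simp at hf⟩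
    rcases Finset.eq_empty_or_nonempty (F.erase e) with h1 | ⟨f, hf⟩
    · obtain ⟨x, hx⟩ := hne e he
      refine ⟨{x}, by
        have := Finset.card_pos.mpr ⟨e, he⟩
        simp only [Finset.card_singleton]; omega, ?_⟩
      intro g hg
      have hge : g = e := by
        by_contra hge
        have : g ∈ F.erase e := Finset.mem_erase.mpr ⟨hge, hg⟩
        simp [h1] at this
      exact ⟨x, hge ▸ hx, Finset.mem_singleton_self x⟩
    · have hfF : f ∈ F := Finset.mem_of_mem_erase hf
      have hfe : f ≠ e := Finset.ne_of_mem_erase hf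
      obtain ⟨v, hv⟩ := hint e he f hfF (Ne.symm hfe)
      rw [Finset.mem_inter] at hv
      set F' := (F.erase e).erase f with hF'
      have hsub : F' ⊂ F := by
        refine Finset.ssubset_iff_of_subset ?_ |>.mpr ⟨e, he, ?_⟩
        · exact (Finset.erase_subset _ _).trans (Finset.erase_subset _ _)
        · simp [hF']
      have hmemF' : ∀ g ∈ F', g ∈ F := fun g hg => hsub.1 hg
      obtain ⟨C, hC, hcov⟩ := ih F' hsub (fun g hg => hne g (hmemF' g hg))
        (fun g hg h hh hgh => hint g (hmemF' g hg) h (hmemF' h hh) hgh)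
      have hcard' : F'.card = F.card - 2 := by
        rw [hF', Finset.card_erase_of_mem hf, Finset.card_erase_of_mem he]
        omega
      have hF2 : 2 ≤ F.card := Finset.one_lt_card.mpr ⟨e, he, f, hfF, Ne.symm hfe⟩
      refine ⟨insert v C, ?_, ?_⟩
      · calc (insert v C).card ≤ C.card + 1 := Finset.card_insert_le _ _
          _ ≤ (F'.card + 1) / 2 + 1 := by omega
          _ ≤ (F.card + 1) / 2 := by omega
      · intro g hg
        by_cases hge : g = e
        · exact ⟨v, hge ▸ hv.1, Finset.mem_insert_self _ _⟩
        by_cases hgf : g = f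
        · exact ⟨v, hgf ▸ hv.2, Finset.mem_insert_self _ _⟩
        obtain ⟨x, hx1, hx2⟩ := hcov g (by simp [hF', hgf, hge, hg])
        exact ⟨x, hx1, Finset.mem_insert_of_mem hx2⟩

lemma degSum {V : Type*} [DecidableEq V] (F : Finset (Finset V))
    (hint : ∀ e ∈ F, ∀ f ∈ F, e ≠ f → (e ∩ f).Nonempty)
    {e : Finset V} (he : e ∈ F) (he5 : e.card = 5) :
    F.card + 4 ≤ ∑ v ∈ e, degree F v := by
  have key : ∑ v ∈ e, degree F v = ∑ g ∈ F, (e ∩ g).card := by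
    simp_rw [degree, Finset.card_filter]
    rw [Finset.sum_comm]
    apply Finset.sum_congr rfl
    intro g _
    have heg : e ∩ g = e.filter (fun x => x ∈ g) := by
      ext x; simp
    rw [heg, Finset.card_filter]
  rw [key]
  have : ∑ g ∈ F, (e ∩ g).card = (e ∩ e).card + ∑ g ∈ F.erase e, (e ∩ g).card := by
    rw [← Finset.sum_erase_add F _ he]; ring
  rw [this, Finset.inter_self, he5]
  have h1 : ∀ g ∈ F.erase e, 1 ≤ (e ∩ g).card := by
    intro g hg
    have := hint e he g (Finset.mem_of_mem_erase hg) (Ne.symm (Finset.ne_of_mem_erase hg))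
    exact Finset.card_pos.mpr this
  have := Finset.card_nsmul_le_sum (F.erase e) (fun g => (e ∩ g).card) 1 h1
  simp only [smul_eq_mul, mul_one] at this
  have : F.card - 1 ≤ ∑ g ∈ F.erase e, (e ∩ g).card := by
    rwa [Finset.card_erase_of_mem he] at this
  have hF1 : 1 ≤ F.card := Finset.card_pos.mpr ⟨e, he⟩
  omega

lemma existsHighDeg {V : Type*} [DecidableEq V] (F : Finset (Finset V))
    (hint : ∀ e ∈ F, ∀ f ∈ F, e ≠ f → (e ∩ f).Nonempty)
    {e : Finset V} (he : e ∈ F) (he5 : e.card = 5) :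
    ∃ v ∈ e, F.card + 4 ≤ 5 * degree F v := by
  by_contra hcon
  push_neg at hcon
  have hb : ∀ v ∈ e, degree F v ≤ (F.card + 3) / 5 + 1 → True := fun _ _ _ => trivial
  have hsum : ∑ v ∈ e, degree F v ≥ F.card + 4 := degSum F hint he he5
  have : ∑ v ∈ e, 5 * degree F v ≤ ∑ v ∈ e, (F.card + 3) := by
    apply Finset.sum_le_sum
    intro v hv
    have := hcon v hv
    omega
  rw [← Finset.mul_sum, Finset.sum_const, he5, smul_eq_mul] at this
  omega

lemma small7 {V : Type*} [DecidableEq V] (F : Finset (Finset V))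
    (hunif : ∀ e ∈ F, e.card = 5)
    (hint : ∀ e ∈ F, ∀ f ∈ F, e ≠ f → (e ∩ f).Nonempty)
    (h7 : F.card ≤ 7) :
    ∃ C : Finset V, C.card ≤ 3 ∧ IsCover F C := by
  have hne : ∀ e ∈ F, e.Nonempty := fun e he =>
    Finset.card_pos.mp (by rw [hunif e he]; norm_num)
  by_cases h6 : F.card ≤ 6
  · obtain ⟨C, hC, hcov⟩ := pairCover F hne hint
    exact ⟨C, by omega, hcov⟩
  · have h7' : F.card = 7 := by omega
    obtain ⟨f, hf⟩ : F.Nonempty := Finset.card_pos.mp (by omega)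
    obtain ⟨w, hwf, hw⟩ := existsHighDeg F hint hf (hunif f hf)
    have hdw : 3 ≤ degree F w := by omega
    set F2 := F.filter (fun e => w ∉ e) with hF2
    have hsplit : F2.card + degree F w = F.card := by
      have h := Finset.card_filter_add_card_filter_not (s := F)
        (p := fun e => w ∈ e)
      simp only [hF2, degree]
      omega
    have hF2sub : ∀ g ∈ F2, g ∈ F := fun g hg => (Finset.mem_filter.mp hg).1
    obtain ⟨C2, hC2, hcov2⟩ := pairCover F2 (fun g hg => hne g (hF2sub g hg))
      (fun g hg h hh hgh => hint g (hF2sub g hg) h (hF2sub h hh) hgh)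
    refine ⟨insert w C2, ?_, ?_⟩
    · have := Finset.card_insert_le w C2
      omega
    · intro g hg
      by_cases hwg : w ∈ g
      · exact ⟨w, hwg, Finset.mem_insert_self _ _⟩
      · obtain ⟨x, hx1, hx2⟩ := hcov2 g (Finset.mem_filter.mpr ⟨hg, hwg⟩)
        exact ⟨x, hx1, Finset.mem_insert_of_mem hx2⟩

/-- Every 5-uniform intersecting hypergraph with exactly 11 edges has covering number
at most 4. -/
theorem stmt13 {V : Type*} [DecidableEq V] (E : Finset (Finset V))
    (hunif : ∀ e ∈ E, e.card = 5)
    (hint : ∀ e ∈ E, ∀ f ∈ E, e ≠ f → (e ∩ f).Nonempty)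
    (hcard : E.card = 11) :
    coverNumber E ≤ 4 := by
  -- Step 1 : there is a vertex of degree ≥ 4
  have hmax : ∃ v, 4 ≤ degree E v := by
    by_contra hcon
    push_neg at hcon
    -- every vertex lying in some edge has degree exactly 3
    have hdeg3 : ∀ e ∈ E, ∀ x ∈ e, degree E x = 3 := by
      intro e he x hx
      have hsum : 15 ≤ ∑ v ∈ e, degree E v := by
        have := degSum E hint he (hunif e he)
        omega
      by_contra hx3
      have hxle : degree E x ≤ 2 := by have := hcon x; omega
      have : ∑ v ∈ e, degree E v = degree E x + ∑ v ∈ e.erase x, degree E v := by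
        rw [← Finset.sum_erase_add e _ hx]; ring
      have hrest : ∑ v ∈ e.erase x, degree E v ≤ 12 := by
        calc ∑ v ∈ e.erase x, degree E v ≤ ∑ _v ∈ e.erase x, 3 :=
              Finset.sum_le_sum (fun v _ => by have := hcon v; omega)
          _ = (e.erase x).card * 3 := by rw [Finset.sum_const, smul_eq_mul]
          _ ≤ 12 := by
              rw [Finset.card_erase_of_mem hx, hunif e he]
      omega
    -- double counting : ∑ cards = ∑ degrees over the support
    set W := E.biUnion id with hW
    have hcount : ∑ g ∈ E, g.card = ∑ v ∈ W, degree E v := by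
      have h1 : ∀ g ∈ E, g.card = ∑ v ∈ W, (if v ∈ g then 1 else 0) := by
        intro g hg
        have hfg : W.filter (fun v => v ∈ g) = g := by
          ext x
          simp only [Finset.mem_filter, hW, Finset.mem_biUnion, id]
          constructor
          · intro hx; exact hx.2
          · intro hx; exact ⟨⟨g, hg, hx⟩, hx⟩
        rw [← Finset.card_filter, hfg]
      rw [Finset.sum_congr rfl h1, Finset.sum_comm]
      apply Finset.sum_congr rfl
      intro v _
      rw [← Finset.card_filter]
      rfl
    have hL : ∑ g ∈ E, g.card = 55 := by
      rw [Finset.sum_congr rfl hunif, Finset.sum_const, hcard, smul_eq_mul]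
    have hR : ∑ v ∈ W, degree E v = 3 * W.card := by
      rw [Finset.sum_congr rfl (fun v hv => ?_), Finset.sum_const, smul_eq_mul, mul_comm]
      simp only [hW, Finset.mem_biUnion, id] at hv
      obtain ⟨g, hg, hvg⟩ := hv
      exact hdeg3 g hg v hvg
    omega
  obtain ⟨v, hv⟩ := hmax
  set E1 := E.filter (fun e => v ∉ e) with hE1
  have hsplit : E1.card + degree E v = E.card := by
    have h := Finset.card_filter_add_card_filter_not (s := E)
      (p := fun e => v ∈ e)
    simp only [hE1, degree]
    omega
  have hE1sub : ∀ g ∈ E1, g ∈ E := fun g hg => (Finset.mem_filter.mp hg).1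
  obtain ⟨C3, hC3, hcov3⟩ := small7 E1 (fun g hg => hunif g (hE1sub g hg))
    (fun g hg h hh hgh => hint g (hE1sub g hg) h (hE1sub h hh) hgh) (by omega)
  have hcover : IsCover E (insert v C3) := by
    intro g hg
    by_cases hvg : v ∈ g
    · exact ⟨v, hvg, Finset.mem_insert_self _ _⟩
    · obtain ⟨x, hx1, hx2⟩ := hcov3 g (Finset.mem_filter.mpr ⟨hg, hvg⟩)
      exact ⟨x, hx1, Finset.mem_insert_of_mem hx2⟩
  have hmem : (insert v C3).card ∈ {n : ℕ | ∃ C : Finset V, C.card = n ∧ IsCover E C} :=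
    ⟨insert v C3, rfl, hcover⟩
  calc coverNumber E ≤ (insert v C3).card := Nat.sInf_le hmem
    _ ≤ C3.card + 1 := Finset.card_insert_le _ _
    _ ≤ 4 := by omega
end

section
/- There exists a 4-uniform intersecting hypergraph with 11 vertices and exactly 9 edges whose covering number is 4. -/
def myE : Finset (Finset (Fin 11)) :=
  {{0,1,2,3},{0,4,5,6},{3,4,5,7},{1,2,6,7},{2,4,8,9},{0,3,6,9},{1,5,9,10},{3,6,8,10},{0,7,8,10}}

set_option maxRecDepth 4000 in
lemma myE_triples : ∀ a b c : Fin 11, ∃ e ∈ myE, a ∉ e ∧ b ∉ e ∧ c ∉ e := by decide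

/-- There exists a 4-uniform intersecting hypergraph with 11 vertices (each vertex lying
on some edge) and exactly 9 edges whose covering number is 4. -/
theorem stmt16 : ∃ E : Finset (Finset (Fin 11)),
    (∀ e ∈ E, e.card = 4) ∧
    (∀ e ∈ E, ∀ f ∈ E, e ≠ f → (e ∩ f).Nonempty) ∧
    E.card = 9 ∧
    (∀ v : Fin 11, ∃ e ∈ E, v ∈ e) ∧
    coverNumber E = 4 := by
  refine ⟨myE, ?_, ?_, by decide, by decide, ?_⟩
  · intro e he; fin_cases he <;> decide
  · intro e he f hf _; fin_cases he <;> fin_cases hf <;> decide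
  have hmem : (4 : ℕ) ∈ {n : ℕ | ∃ C : Finset (Fin 11), C.card = n ∧ IsCover myE C} :=
    ⟨{0,1,2,3}, by decide, by intro e he; fin_cases he <;> decide⟩
  refine le_antisymm (Nat.sInf_le hmem) ?_
  refine le_csInf ⟨4, hmem⟩ ?_
  rintro n ⟨C, hcard, hcov⟩
  by_contra h
  push_neg at h
  have hle : C.card ≤ 3 := by omega
  obtain ⟨D, hCD, hD3⟩ := Finset.exists_superset_card_eq hle (by simp)
  obtain ⟨a, b, c, -, -, -, rfl⟩ := Finset.card_eq_three.mp hD3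
  obtain ⟨e, he, ha, hb, hc⟩ := myE_triples a b c
  obtain ⟨v, hv, hvC⟩ := hcov e he
  have := hCD hvC
  simp only [Finset.mem_insert, Finset.mem_singleton] at this
  rcases this with rfl|rfl|rfl <;> contradiction
end

section
/- There exists a 5-uniform intersecting hypergraph with 17 vertices and exactly 13 edges whose covering number is 5. -/
variable {V : Type*}

theorem IsCover.erase_filter [DecidableEq V] {E : Finset (Finset V)} {C : Finset V}
    (hC : IsCover E C) (v : V) : IsCover (E.filter (v ∉ ·)) (C.erase v) := by
  intro e he
  rw [Finset.mem_filter] at he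
  obtain ⟨w, hwe, hwC⟩ := hC e he.1
  exact ⟨w, hwe, Finset.mem_erase.2 ⟨fun hwv => he.2 (hwv ▸ hwe), hwC⟩⟩

theorem coverNumber_eq_card {E : Finset (Finset V)} {C : Finset V} (hC : IsCover E C)
    (hmin : ∀ D, IsCover E D → C.card ≤ D.card) : coverNumber E = C.card :=
  le_antisymm (Nat.sInf_le ⟨C, rfl, hC⟩)
    (le_csInf ⟨_, C, rfl, hC⟩ (by rintro n ⟨D, rfl, hD⟩; exact hmin D hD))

def noCoverOfCardLE [DecidableEq V] : ℕ → List (Finset V) → Bool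
  | _, [] => false
  | 0, _ :: _ => true
  | k + 1, e :: es => decide (∀ v ∈ e, noCoverOfCardLE k ((e :: es).filter (v ∉ ·)) = true)

theorem lt_card_of_noCoverOfCardLE [DecidableEq V] {k : ℕ} {L : List (Finset V)}
    (h : noCoverOfCardLE k L = true) {C : Finset V} (hC : IsCover L.toFinset C) :
    k < C.card := by
  induction k generalizing L C with
  | zero =>
    obtain _ | ⟨e, es⟩ := L
    · simp [noCoverOfCardLE] at h
    · obtain ⟨v, -, hv⟩ := hC e (by simp)
      exact Finset.card_pos.2 ⟨v, hv⟩
  | succ k ih =>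
    obtain _ | ⟨e, es⟩ := L
    · simp [noCoverOfCardLE] at h
    · obtain ⟨v, hve, hvC⟩ := hC e (by simp)
      have hbranch : noCoverOfCardLE k ((e :: es).filter (v ∉ ·)) = true := by
        simp only [noCoverOfCardLE, decide_eq_true_eq] at h
        exact h v hve
      have hrest := ih hbranch (by simpa [List.toFinset_filter] using hC.erase_filter v)
      rw [Finset.card_erase_of_mem hvC] at hrest
      omega

def edges17 : List (Finset (Fin 17)) :=
  [{4, 7, 8, 11, 14}, {1, 7, 12, 14, 15}, {4, 6, 9, 10, 15}, {2, 4, 12, 13, 16},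
   {1, 3, 6, 11, 16}, {0, 1, 2, 7, 10}, {0, 3, 10, 11, 12}, {1, 5, 8, 9, 12},
   {3, 5, 10, 13, 14}, {2, 3, 5, 7, 9}, {0, 6, 9, 13, 14}, {0, 5, 8, 15, 16},
   {2, 8, 11, 13, 15}]

theorem card_eq_five_of_mem_edges17 : ∀ e ∈ edges17.toFinset, e.card = 5 := by
  -- Unfolded first: otherwise `decide` quantifies over all of `Finset (Fin 17)` via `Fintype`.
  simp only [List.mem_toFinset, edges17, List.forall_mem_cons, List.not_mem_nil,
    IsEmpty.forall_iff, forall_const, and_true]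
  decide

set_option synthInstance.maxSize 1000 in
theorem inter_nonempty_of_mem_edges17 :
    ∀ e ∈ edges17.toFinset, ∀ f ∈ edges17.toFinset, (e ∩ f).Nonempty := by
  simp only [List.mem_toFinset, edges17, List.forall_mem_cons, List.not_mem_nil,
    IsEmpty.forall_iff, forall_const, and_true]
  decide

theorem isCover_edges17 : IsCover edges17.toFinset {4, 7, 8, 11, 14} := by
  simp only [IsCover, List.mem_toFinset, edges17, List.forall_mem_cons, List.not_mem_nil,
    IsEmpty.forall_iff, forall_const, and_true]
  decide

theorem card_edges17 : edges17.toFinset.card = 13 :=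
  rfl

theorem exists_mem_edges17 : ∀ v : Fin 17, ∃ e ∈ edges17.toFinset, v ∈ e := by
  decide

theorem lt_card_of_isCover_edges17 {C : Finset (Fin 17)} (hC : IsCover edges17.toFinset C) :
    4 < C.card :=
  lt_card_of_noCoverOfCardLE (by decide) hC

/-- There exists a 5-uniform intersecting hypergraph with 17 vertices (each vertex lying
on some edge) and exactly 13 edges whose covering number is 5. -/
theorem stmt17 : ∃ E : Finset (Finset (Fin 17)),
    (∀ e ∈ E, e.card = 5) ∧
    (∀ e ∈ E, ∀ f ∈ E, e ≠ f → (e ∩ f).Nonempty) ∧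
    E.card = 13 ∧
    (∀ v : Fin 17, ∃ e ∈ E, v ∈ e) ∧
    coverNumber E = 5 := by
  refine ⟨edges17.toFinset, card_eq_five_of_mem_edges17,
    fun e he f hf _ => inter_nonempty_of_mem_edges17 e he f hf, card_edges17,
    exists_mem_edges17, ?_⟩
  exact coverNumber_eq_card isCover_edges17 fun D hD => lt_card_of_isCover_edges17 hD
end

section
/- Every 2-intersecting 5-uniform hypergraph with at most 10 edges has covering number at most 3. -/
open Finset

section

variable {V : Type*} {E : Finset (Finset V)}

theorem coverNumber_le_card {C : Finset V} (h : IsCover E C) : coverNumber E ≤ #C :=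
  Nat.sInf_le ⟨C, rfl, h⟩

theorem isCover_empty_family (C : Finset V) : IsCover ∅ C := by
  simp [IsCover]

theorem isCover_singleton {v : V} (h : ∀ e ∈ E, v ∈ e) : IsCover E {v} :=
  fun e he => ⟨v, h e he, mem_singleton_self v⟩

variable [DecidableEq V]

theorem IsCover.insert_of_filter_not_mem {v : V} {C : Finset V}
    (h : IsCover {e ∈ E | v ∉ e} C) : IsCover E (insert v C) := by
  intro e he
  by_cases hv : v ∈ e
  · exact ⟨v, hv, mem_insert_self v C⟩
  · obtain ⟨w, hwe, hwC⟩ := h e (mem_filter.mpr ⟨he, hv⟩)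
    exact ⟨w, hwe, mem_insert_of_mem hwC⟩

theorem sum_degree_eq_sum_card_inter (s : Finset V) :
    ∑ v ∈ s, degree E v = ∑ f ∈ E, #(s ∩ f) := by
  simp only [degree, card_filter, ← filter_mem_eq_inter]
  exact sum_comm

theorem exists_mul_degree_ge {k t : ℕ} (hk : 0 < k) (hunif : ∀ e ∈ E, #e = k)
    (hint : ∀ e ∈ E, ∀ f ∈ E, e ≠ f → t ≤ #(e ∩ f)) (hE : E.Nonempty) :
    ∃ v, k + t * (#E - 1) ≤ k * degree E v := by
  obtain ⟨e, he⟩ := hE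
  have hsum : k + t * (#E - 1) ≤ ∑ v ∈ e, degree E v := by
    rw [sum_degree_eq_sum_card_inter, ← add_sum_erase E _ he, inter_self, hunif e he,
      ← card_erase_of_mem he, mul_comm, ← smul_eq_mul, ← sum_const]
    gcongr with f hf
    exact hint e he f (mem_of_mem_erase hf) (ne_of_mem_erase hf).symm
  obtain ⟨v, -, hv⟩ := exists_max_image e (degree E) (card_pos.mp (by rw [hunif e he]; exact hk))
  refine ⟨v, hsum.trans ?_⟩
  calc ∑ w ∈ e, degree E w ≤ ∑ _w ∈ e, degree E v := sum_le_sum hv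
    _ = k * degree E v := by rw [sum_const, smul_eq_mul, hunif e he]

/-- Greedy step: add a vertex of maximal degree to a cover of the edges it misses. -/
theorem exists_isCover_card_le_succ {k t n : ℕ} (hk : 0 < k) (hunif : ∀ e ∈ E, #e = k)
    (hint : ∀ e ∈ E, ∀ f ∈ E, e ≠ f → t ≤ #(e ∩ f))
    (hrest : ∀ F ⊆ E, k * #F + t * (#E - 1) + k ≤ k * #E → ∃ C, #C ≤ n ∧ IsCover F C) :
    ∃ C, #C ≤ n + 1 ∧ IsCover E C := by
  obtain rfl | hE := E.eq_empty_or_nonempty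
  · exact ⟨∅, by simp, isCover_empty_family ∅⟩
  obtain ⟨v, hv⟩ := exists_mul_degree_ge hk hunif hint hE
  have hsplit : degree E v + #{e ∈ E | v ∉ e} = #E := card_filter_add_card_filter_not _
  have hmul : k * #E = k * degree E v + k * #{e ∈ E | v ∉ e} := by rw [← hsplit, mul_add]
  obtain ⟨C, hC, hcov⟩ := hrest {e ∈ E | v ∉ e} (filter_subset _ _) (by omega)
  exact ⟨insert v C, (card_insert_le v C).trans (by omega), hcov.insert_of_filter_not_mem⟩

theorem exists_isCover_card_le_one_of_card_le_two (hne : ∀ e ∈ E, e.Nonempty)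
    (hint : ∀ e ∈ E, ∀ f ∈ E, e ≠ f → (e ∩ f).Nonempty) (hE : #E ≤ 2) :
    ∃ C : Finset V, #C ≤ 1 ∧ IsCover E C := by
  suffices h : E = ∅ ∨ ∃ v, ∀ e ∈ E, v ∈ e by
    rcases h with rfl | ⟨v, hv⟩
    · exact ⟨∅, by simp, isCover_empty_family ∅⟩
    · exact ⟨{v}, (card_singleton v).le, isCover_singleton hv⟩
  interval_cases h : #E
  · exact Or.inl (card_eq_zero.mp h)
  · obtain ⟨e, rfl⟩ := card_eq_one.mp h
    obtain ⟨v, hv⟩ := hne e (mem_singleton_self e)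
    exact Or.inr ⟨v, by simpa using hv⟩
  · obtain ⟨e, f, hef, rfl⟩ := card_eq_two.mp h
    obtain ⟨v, hv⟩ := hint e (by simp) f (by simp) hef
    rw [mem_inter] at hv
    exact Or.inr ⟨v, by simpa using hv⟩

end

/-- Every 2-intersecting 5-uniform hypergraph with at most 10 edges has covering number
at most 3. -/
theorem stmt18 {V : Type*} [DecidableEq V] (E : Finset (Finset V))
    (hunif : ∀ e ∈ E, e.card = 5)
    (hint2 : ∀ e ∈ E, ∀ f ∈ E, e ≠ f → 2 ≤ (e ∩ f).card)
    (hcard : E.card ≤ 10) :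
    coverNumber E ≤ 3 := by
  have hcover₂ : ∀ F ⊆ E, #F ≤ 2 → ∃ C, #C ≤ 1 ∧ IsCover F C := fun F hF hF₂ =>
    exists_isCover_card_le_one_of_card_le_two
      (fun e he => card_pos.mp (by rw [hunif e (hF he)]; norm_num))
      (fun e he f hf hef => card_pos.mp (by have := hint2 e (hF he) f (hF hf) hef; omega)) hF₂
  have hcover₅ : ∀ F ⊆ E, #F ≤ 5 → ∃ C, #C ≤ 2 ∧ IsCover F C := fun F hF hF₅ =>
    exists_isCover_card_le_succ (by norm_num) (fun e he => hunif e (hF he))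
      (fun e he f hf => hint2 e (hF he) f (hF hf))
      fun G hG hGF => hcover₂ G (hG.trans hF) (by omega)
  obtain ⟨C, hC, hcov⟩ := exists_isCover_card_le_succ (by norm_num) hunif hint2
    fun F hF hFE => hcover₅ F hF (by omega)
  exact (coverNumber_le_card hcov).trans hC
end

section
/- Let H be the hypergraph with vertex set {1, 2, ..., 10} and the six edges {1,2,3,4,10}, {4,5,6,7,10}, {7,8,9,1,10}, {9,1,2,5,6}, {3,4,5,8,9}, {2,3,6,7,8}. Then H is 5-uniform, 2-intersecting, every vertex has degree exactly 3, and the covering number of H is 3 (in particular H has no cover of size 2). -/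
set_option maxRecDepth 4000


/-- The "three hares" hypergraph on vertex set `{1, …, 10}`. -/
def threeHares : Finset (Finset ℕ) :=
  {{1, 2, 3, 4, 10}, {4, 5, 6, 7, 10}, {7, 8, 9, 1, 10},
   {9, 1, 2, 5, 6}, {3, 4, 5, 8, 9}, {2, 3, 6, 7, 8}}

lemma edges_subset : ∀ e ∈ threeHares, e ⊆ Finset.Icc 1 10 := by decide

lemma no_small_cover_aux :
    ∀ a ∈ Finset.Icc (1:ℕ) 10, ∀ b ∈ Finset.Icc (1:ℕ) 10,
      ∃ e ∈ threeHares, ∀ v ∈ e, v ≠ a ∧ v ≠ b := by decide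

lemma subset_pair {C : Finset ℕ} (h : C.card ≤ 2) : ∃ a b, C ⊆ {a, b} := by
  interval_cases h' : C.card
  · exact ⟨1, 1, by simp [Finset.card_eq_zero.mp h']⟩
  · obtain ⟨a, rfl⟩ := Finset.card_eq_one.mp h'
    exact ⟨a, a, by simp⟩
  · obtain ⟨a, b, -, rfl⟩ := Finset.card_eq_two.mp h'
    exact ⟨a, b, le_rfl⟩

lemma no_small_cover : ¬ (∃ C : Finset ℕ, C.card ≤ 2 ∧ IsCover threeHares C) := by
  rintro ⟨C, hC, hcov⟩
  obtain ⟨a, b, hsub⟩ := subset_pair hC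
  set a' : ℕ := if a ∈ Finset.Icc 1 10 then a else 1 with ha'
  set b' : ℕ := if b ∈ Finset.Icc 1 10 then b else 1 with hb'
  have ha'mem : a' ∈ Finset.Icc (1:ℕ) 10 := by
    rw [ha']; split <;> simp_all
  have hb'mem : b' ∈ Finset.Icc (1:ℕ) 10 := by
    rw [hb']; split <;> simp_all
  obtain ⟨e, he, hmiss⟩ := no_small_cover_aux a' ha'mem b' hb'mem
  obtain ⟨v, hv, hvC⟩ := hcov e he
  have hvIcc : v ∈ Finset.Icc (1:ℕ) 10 := edges_subset e he hv
  have := hsub hvC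
  simp only [Finset.mem_insert, Finset.mem_singleton] at this
  obtain ⟨h1, h2⟩ := hmiss v hv
  rcases this with rfl | rfl
  · exact h1 (by rw [ha', if_pos hvIcc])
  · exact h2 (by rw [hb', if_pos hvIcc])

/-- The three hares hypergraph is 5-uniform, 2-intersecting, 3-regular on its vertex set
`{1, …, 10}`, and has covering number 3 (in particular, no cover of size 2). -/
theorem stmt19 :
    (∀ e ∈ threeHares, e.card = 5) ∧
    (∀ e ∈ threeHares, ∀ f ∈ threeHares, e ≠ f → 2 ≤ (e ∩ f).card) ∧
    (∀ v ∈ Finset.Icc 1 10, degree threeHares v = 3) ∧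
    coverNumber threeHares = 3 ∧
    ¬ (∃ C : Finset ℕ, C.card ≤ 2 ∧ IsCover threeHares C) := by
  refine ⟨by decide, by decide, by decide, ?_, no_small_cover⟩
  apply le_antisymm
  · apply Nat.sInf_le
    exact ⟨{1, 4, 8}, by decide, by unfold IsCover; decide⟩
  · refine le_csInf ⟨3, ⟨{1, 4, 8}, by decide, by unfold IsCover; decide⟩⟩ ?_
    rintro m ⟨C, hc, hcov⟩
    by_contra h
    exact no_small_cover ⟨C, by omega, hcov⟩
end
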